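/- Let Σ = {a, b}, let (n_j)_{j≥1} be a sequence of integers with n_j ≥ 2, and define α₀ = a, β₀ = b, α_{j+1} = (α_j² β_j)^{n_{j+1}}, β_{j+1} = (β_j² α_j)^{n_{j+1}}. Let N_k = |α_k| and Ñ_k = N_k - 3N_{k-1} for k ≥ 1. Then for every k ≥ 1 and every d with 0 < d ≤ Ñ_k, the word V = α_k β_k (of length 2N_k) is not d-periodic: there exists an index i with 1 ≤ i ≤ 2N_k - d such that V[i] ≠ V[i+d]. -/

import Mathlib

/-!
Write `N = N_k`. The word `α_{k+1} β_{k+1}` contains `β_k³` where `α_{k+1}` ends in `β_k` and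
`β_{k+1}` begins with `β_k β_k`. Since `d ≤ N_{k+1} - 3N`, some multiple `t d` of a period `d`
lies in `(N, N + d]`, and shifting that occurrence of `β_k³` by `t d` lands on a window of length
`3N` of `β_{k+1} = (β_k β_k α_k)^{n_{k+1}}` starting at offset `t d - N ≤ N_{k+1} - 3N`. Such a
window is a rotation of `β_k β_k α_k`, so it contains strictly more letters `a` than `β_k³`,
because `β_k` contains fewer `a`'s than `α_k`.
-/

mutual
/-- The word `α_j` over `{a, b}` (with `a := true`, `b := false`):
`α₀ = a`, `α_{j+1} = (α_j α_j β_j)^{n_{j+1}}`. -/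
def wordA (n : ℕ → ℕ) : ℕ → List Bool
  | 0 => [true]
  | j + 1 => (List.replicate (n (j + 1)) (wordA n j ++ wordA n j ++ wordB n j)).flatten

/-- The word `β_j`: `β₀ = b`, `β_{j+1} = (β_j β_j α_j)^{n_{j+1}}`. -/
def wordB (n : ℕ → ℕ) : ℕ → List Bool
  | 0 => [false]
  | j + 1 => (List.replicate (n (j + 1)) (wordB n j ++ wordB n j ++ wordA n j)).flatten
end

/-- `N_k = ∏_{j=1}^k (3 n_j)`, the common length of `α_k` and `β_k`. -/
def Nlen (n : ℕ → ℕ) (k : ℕ) : ℕ := ∏ j ∈ Finset.Icc 1 k, 3 * n j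

namespace List

variable {α : Type*}

def IsPeriodic (V : List α) (d : ℕ) : Prop :=
  ∀ i (h : i + d < V.length), V[i] = V[i + d]

theorem IsPeriodic.nat_mul {V : List α} {d : ℕ} (hV : V.IsPeriodic d) (t : ℕ) :
    V.IsPeriodic (t * d) := by
  induction t with
  | zero => intro i h; simp
  | succ t ih =>
    intro i h
    rw [hV i (by grind), ih (i + d) (by grind)]
    grind

theorem IsPeriodic.take_drop_add {V : List α} {D : ℕ} (hV : V.IsPeriodic D) {p L : ℕ}
    (h : p + D + L ≤ V.length) : (V.drop (p + D)).take L = (V.drop p).take L := by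
  apply List.ext_getElem (by simp; omega)
  intro i h₁ h₂
  simp only [getElem_take, getElem_drop]
  rw [hV (p + i) (by simp at h₁; omega)]
  grind

theorem take_length_drop_flatten_replicate (P : List α) {m q : ℕ}
    (h : q + P.length ≤ m * P.length) :
    ((replicate m P).flatten.drop q).take P.length = P.rotate q := by
  induction m generalizing q with
  | zero => simp_all
  | succ m ih =>
    rw [replicate_succ, flatten_cons, drop_append]
    rcases lt_or_ge q P.length with hq | hq
    · rw [Nat.sub_eq_zero_of_le hq.le, drop_zero, take_append, length_drop,
        Nat.sub_sub_self hq.le, rotate_eq_drop_append_take hq.le, take_of_length_le (by simp)]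
      congr 1
      cases m with
      | zero =>
        obtain rfl : q = 0 := by omega
        simp
      | succ m => simp [replicate_succ, take_append, hq.le]
    · rw [drop_eq_nil_of_le hq, nil_append, ih (by rw [Nat.succ_mul] at h; omega), ← rotate_mod,
        ← Nat.mod_eq_sub_mod hq, rotate_mod]

end List

section Words

variable (n : ℕ → ℕ)

theorem Nlen_succ (k : ℕ) : Nlen n (k + 1) = 3 * n (k + 1) * Nlen n k := by
  rw [Nlen, Finset.prod_Icc_succ_top (by omega), ← Nlen, mul_comm]

theorem length_wordA_and_length_wordB (k : ℕ) :
    (wordA n k).length = Nlen n k ∧ (wordB n k).length = Nlen n k := by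
  induction k with
  | zero => simp [wordA, wordB, Nlen]
  | succ k ih =>
    simp only [wordA, wordB, List.length_flatten, List.map_replicate, List.sum_replicate,
      List.length_append, ih, Nlen_succ, smul_eq_mul]
    constructor <;> ring

theorem count_wordB_lt_count_wordA (hn : ∀ j, 1 ≤ j → 0 < n j) (k : ℕ) :
    (wordB n k).count true < (wordA n k).count true := by
  induction k with
  | zero => simp [wordA, wordB]
  | succ k ih =>
    simp only [wordA, wordB, List.count_flatten, List.map_replicate, List.sum_replicate,
      List.count_append, smul_eq_mul]
    exact Nat.mul_lt_mul_of_pos_left (by omega) (hn (k + 1) (by omega))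

theorem wordB_suffix_wordA_succ {k : ℕ} (h : 0 < n (k + 1)) : wordB n k <:+ wordA n (k + 1) := by
  obtain ⟨m, hm⟩ := Nat.exists_eq_add_of_lt h
  refine ⟨(List.replicate m (wordA n k ++ wordA n k ++ wordB n k)).flatten ++ wordA n k ++
    wordA n k, ?_⟩
  rw [wordA, hm, zero_add, List.replicate_succ', List.flatten_append]
  simp

theorem wordB_append_wordB_prefix_wordB_succ {k : ℕ} (h : 0 < n (k + 1)) :
    wordB n k ++ wordB n k <+: wordB n (k + 1) := by
  obtain ⟨m, hm⟩ := Nat.exists_eq_add_of_lt h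
  refine ⟨wordA n k ++ (List.replicate m (wordB n k ++ wordB n k ++ wordA n k)).flatten, ?_⟩
  rw [wordB, hm, zero_add, List.replicate_succ]
  simp

theorem not_isPeriodic_wordA_append_wordB (hn : ∀ j, 1 ≤ j → 0 < n j) (k : ℕ) {d : ℕ}
    (hd0 : 0 < d) (hd : d ≤ Nlen n (k + 1) - 3 * Nlen n k) :
    ¬ (wordA n (k + 1) ++ wordB n (k + 1)).IsPeriodic d := by
  intro hper
  set N := Nlen n k
  obtain ⟨t, ht₁, ht₂⟩ : ∃ t, N < t * d ∧ t * d ≤ N + d := by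
    refine ⟨N / d + 1, ?_, ?_⟩ <;> rw [Nat.add_one_mul]
    exacts [Nat.lt_div_mul_add hd0, Nat.add_le_add_right (Nat.div_mul_le_self N d) d]
  obtain ⟨X, hX⟩ := wordB_suffix_wordA_succ n (hn (k + 1) (by omega))
  obtain ⟨Y, hY⟩ := wordB_append_wordB_prefix_wordB_succ n (hn (k + 1) (by omega))
  obtain ⟨hA, hB⟩ := length_wordA_and_length_wordB n k
  obtain ⟨hA', hB'⟩ := length_wordA_and_length_wordB n (k + 1)
  have hX_len : X.length + N = Nlen n (k + 1) := by
    rw [← hA', ← hX, List.length_append, hB]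
  have hcube : ((wordA n (k + 1) ++ wordB n (k + 1)).drop X.length).take (3 * N)
      = wordB n k ++ wordB n k ++ wordB n k := by
    rw [show wordA n (k + 1) ++ wordB n (k + 1)
        = X ++ ((wordB n k ++ wordB n k ++ wordB n k) ++ Y) by simp [← hX, ← hY],
      List.drop_left, List.take_left' (by simp only [List.length_append, hB, N]; ring)]
  have hrotation : ((wordA n (k + 1) ++ wordB n (k + 1)).drop (X.length + t * d)).take (3 * N)
      = (wordB n k ++ wordB n k ++ wordA n k).rotate (t * d - N) := by
    have hP : (wordB n k ++ wordB n k ++ wordA n k).length = 3 * N := by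
      simp only [List.length_append, hA, hB, N]; ring
    rw [show X.length + t * d = (wordA n (k + 1)).length + (t * d - N) by omega,
      List.drop_length_add_append, wordB, ← hP]
    refine List.take_length_drop_flatten_replicate _ ?_
    rw [hP, show n (k + 1) * (3 * N) = Nlen n (k + 1) by rw [Nlen_succ]; ring]
    omega
  have hcount := congrArg (List.count true)
    ((hper.nat_mul t).take_drop_add (p := X.length) (L := 3 * N) (by simp; omega))
  rw [hcube, hrotation, (List.rotate_perm _ _).count_eq] at hcount
  simp only [List.count_append] at hcount
  have := count_wordB_lt_count_wordA n hn k
  omega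

end Words

/-- For `k ≥ 1` and `0 < d ≤ Ñ_k = N_k - 3N_{k-1}`, the word `V = α_k β_k`
is not `d`-periodic: some position `i` (0-indexed, with `i + d < |V| = 2N_k`) satisfies
`V[i] ≠ V[i+d]`. -/
theorem stmt7 (n : ℕ → ℕ) (hn : ∀ j, 1 ≤ j → 2 ≤ n j) (k : ℕ) (hk : 1 ≤ k) (d : ℕ)
    (hd0 : 0 < d) (hd : d ≤ Nlen n k - 3 * Nlen n (k - 1)) :
    ∃ i : ℕ, i + d < (wordA n k ++ wordB n k).length ∧
      (wordA n k ++ wordB n k).getD i true ≠ (wordA n k ++ wordB n k).getD (i + d) true := by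
  obtain ⟨k, rfl⟩ := Nat.exists_eq_add_of_le' hk
  by_contra hper
  push Not at hper
  refine not_isPeriodic_wordA_append_wordB n (fun j hj => zero_lt_two.trans_le (hn j hj)) k hd0 hd
    fun i hi => ?_
  have h := hper i hi
  rwa [List.getD_eq_getElem _ _ (by omega), List.getD_eq_getElem _ _ hi] at h
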